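/- Suppose T = β_0 D + Σ_{k=1}^p φ_k Z_k + ε with E[ε | Z] = 0, where Z = (Z_1,...,Z_p) are mutually independent with means ζ_j. Assume E[(Z_1 − ζ_1)(Z_2 − ζ_2) D] ≠ 0. Then β_0 = E[(Z_1 − ζ_1)(Z_2 − ζ_2) T] / E[(Z_1 − ζ_1)(Z_2 − ζ_2) D]. -/

import Mathlib

open MeasureTheory ProbabilityTheory

/-!
Multiply the structural equation by the interaction `W = (Z₁ - ζ₁)(Z₂ - ζ₂)` and integrate.
`E[W ε] = 0` because `W` is `σ(Z)`-measurable and `E[ε ∣ Z] = 0`, and `E[W Z_k] = 0` for every `k`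
because at least one of the two centered factors of `W` is independent of `Z_k` and of the other
factor. Hence `E[W T] = β₀ E[W D]`, whatever the `φ_k`.
-/

lemma MeasureTheory.integral_mul_eq_zero_of_condExp_eq_zero {Ω : Type*} {m m₀ : MeasurableSpace Ω}
    {μ : Measure[m₀] Ω} [IsFiniteMeasure μ] (hm : m ≤ m₀) {f g : Ω → ℝ}
    (hf : StronglyMeasurable[m] f) (hfg : Integrable (f * g) μ) (hg : Integrable g μ)
    (hcond : μ[g | m] =ᵐ[μ] 0) :
    ∫ ω, f ω * g ω ∂μ = 0 := by
  have := isFiniteMeasure_trim (μ := μ) hm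
  calc ∫ ω, f ω * g ω ∂μ = ∫ ω, (μ[f * g | m]) ω ∂μ := (integral_condExp hm).symm
    _ = ∫ ω, (0 : Ω → ℝ) ω ∂μ := by
        refine integral_congr_ae ((condExp_mul_of_stronglyMeasurable_left hf hfg hg).trans ?_)
        filter_upwards [hcond] with ω hω
        simp [hω]
    _ = 0 := integral_zero Ω ℝ

section

variable {Ω : Type*} [MeasurableSpace Ω] {μ : Measure Ω}

lemma MeasureTheory.integral_mul_eq_of_eq_linear {ι : Type*} [Fintype ι]
    {W T D ε : Ω → ℝ} {X : ι → Ω → ℝ} {β : ℝ} {φ : ι → ℝ}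
    (hT : ∀ ω, T ω = β * D ω + (∑ k, φ k * X k ω) + ε ω)
    (hD : Integrable (fun ω => W ω * D ω) μ) (hX : ∀ k, Integrable (fun ω => W ω * X k ω) μ)
    (hε : Integrable (fun ω => W ω * ε ω) μ) :
    ∫ ω, W ω * T ω ∂μ =
      β * ∫ ω, W ω * D ω ∂μ + ∑ k, φ k * ∫ ω, W ω * X k ω ∂μ + ∫ ω, W ω * ε ω ∂μ := by
  have hsum : Integrable (fun ω => ∑ k, φ k * (W ω * X k ω)) μ :=
    integrable_finsetSum _ fun k _ => (hX k).const_mul _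
  simp only [hT, mul_add, Finset.mul_sum, mul_left_comm (W _)]
  rw [integral_add ?_ hε, integral_add (hD.const_mul β) hsum, integral_const_mul,
    integral_finsetSum _ fun k _ => (hX k).const_mul _]
  · simp only [integral_const_mul]
  · exact (hD.const_mul β).add hsum

lemma ProbabilityTheory.IndepFun.integral_comp_mul_sub_integral_eq_zero [IsProbabilityMeasure μ]
    {β : Type*} [MeasurableSpace β] {X : Ω → β} {Y : Ω → ℝ} (hXY : IndepFun X Y μ)
    (hX : Measurable X) (hY : Measurable Y) {g : β → ℝ} (hg : Measurable g) :
    ∫ ω, g (X ω) * (Y ω - ∫ ω', Y ω' ∂μ) ∂μ = 0 := by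
  have hY_centered : ∫ ω, Y ω - ∫ ω', Y ω' ∂μ ∂μ = 0 := by
    simpa only [average_eq_integral] using integral_sub_average μ Y
  calc ∫ ω, g (X ω) * (Y ω - ∫ ω', Y ω' ∂μ) ∂μ
      = (∫ ω, g (X ω) ∂μ) * ∫ ω, Y ω - ∫ ω', Y ω' ∂μ ∂μ :=
        (hXY.comp hg (measurable_id.sub_const _)).integral_mul_eq_mul_integral
          (hg.comp hX).aestronglyMeasurable (hY.sub_const _).aestronglyMeasurable
    _ = 0 := by rw [hY_centered, mul_zero]

lemma ProbabilityTheory.iIndepFun.integral_sub_mul_sub_mul_eq_zero [IsProbabilityMeasure μ]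
    {ι : Type*} {Z : ι → Ω → ℝ} (hZ : iIndepFun Z μ) (hmeas : ∀ i, Measurable (Z i))
    {ζ : ι → ℝ} (hζ : ∀ i, ζ i = ∫ ω, Z i ω ∂μ) {i j : ι} (hij : i ≠ j) (k : ι) :
    ∫ ω, (Z i ω - ζ i) * (Z j ω - ζ j) * Z k ω ∂μ = 0 := by
  have key : ∀ n m, m ≠ n → m ≠ k →
      ∫ ω, (Z n ω - ζ n) * Z k ω * (Z m ω - ζ m) ∂μ = 0 := fun n m hmn hmk => by
    rw [hζ m]
    exact (hZ.indepFun_prodMk hmeas n k m hmn.symm hmk.symm).integral_comp_mul_sub_integral_eq_zero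
      ((hmeas n).prodMk (hmeas k)) (hmeas m) ((measurable_fst.sub_const _).mul measurable_snd)
  by_cases hki : k = i
  · subst hki
    simpa only [mul_right_comm] using key k j (Ne.symm hij) (Ne.symm hij)
  · simpa only [mul_comm, mul_left_comm] using key j i hij (Ne.symm hki)

end

theorem interaction_ratio_identifies_beta_general
    {Ω : Type*} [MeasurableSpace Ω] (μ : Measure Ω) [IsProbabilityMeasure μ]
    {p : ℕ} (Z : Fin p → Ω → ℝ) (T D ε : Ω → ℝ)
    (hmeas : ∀ i, Measurable (Z i))
    (hindep : iIndepFun Z μ)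
    (ζ : Fin p → ℝ) (hζ : ∀ i, ζ i = ∫ ω, Z i ω ∂μ)
    (β₀ : ℝ) (φ : Fin p → ℝ)
    (hstruct : ∀ ω, T ω = β₀ * D ω + (∑ k, φ k * Z k ω) + ε ω)
    (hεint : Integrable ε μ)
    (hcond : μ[ε | MeasurableSpace.comap (fun ω i => Z i ω) inferInstance] =ᵐ[μ] 0)
    (j₁ j₂ : Fin p) (hj : j₁ ≠ j₂)
    (hDprod : Integrable (fun ω => (Z j₁ ω - ζ j₁) * (Z j₂ ω - ζ j₂) * D ω) μ)
    (hεprod : Integrable (fun ω => (Z j₁ ω - ζ j₁) * (Z j₂ ω - ζ j₂) * ε ω) μ)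
    (hZprod : ∀ k, Integrable (fun ω => (Z j₁ ω - ζ j₁) * (Z j₂ ω - ζ j₂) * Z k ω) μ)
    (hden : ∫ ω, (Z j₁ ω - ζ j₁) * (Z j₂ ω - ζ j₂) * D ω ∂μ ≠ 0) :
    β₀ = (∫ ω, (Z j₁ ω - ζ j₁) * (Z j₂ ω - ζ j₂) * T ω ∂μ) /
          (∫ ω, (Z j₁ ω - ζ j₁) * (Z j₂ ω - ζ j₂) * D ω ∂μ) := by
  have hZ : Measurable (fun ω i => Z i ω) := measurable_pi_iff.mpr hmeas
  have hW : StronglyMeasurable[MeasurableSpace.comap (fun ω i => Z i ω) inferInstance]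
      (fun ω => (Z j₁ ω - ζ j₁) * (Z j₂ ω - ζ j₂)) :=
    have hZm := comap_measurable (fun ω i => Z i ω)
    ((((measurable_pi_apply j₁).comp hZm).sub_const _).mul
      (((measurable_pi_apply j₂).comp hZm).sub_const _)).stronglyMeasurable
  have hWε : ∫ ω, (Z j₁ ω - ζ j₁) * (Z j₂ ω - ζ j₂) * ε ω ∂μ = 0 :=
    integral_mul_eq_zero_of_condExp_eq_zero hZ.comap_le hW hεprod hεint hcond
  have hWZ : ∀ k, ∫ ω, (Z j₁ ω - ζ j₁) * (Z j₂ ω - ζ j₂) * Z k ω ∂μ = 0 :=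
    hindep.integral_sub_mul_sub_mul_eq_zero hmeas hζ hj
  rw [integral_mul_eq_of_eq_linear hstruct hDprod hZprod hεprod, hWε]
  simp only [hWZ, mul_zero, Finset.sum_const_zero, add_zero]
  field_simp

/-- Interaction-based identification: under the structural model
`T = β₀ D + Σ φ_k Z_k + ε` with `E[ε ∣ Z] = 0` and mutually independent instruments,
if `E[(Z₁−ζ₁)(Z₂−ζ₂)D] ≠ 0` then
`β₀ = E[(Z₁−ζ₁)(Z₂−ζ₂)T] / E[(Z₁−ζ₁)(Z₂−ζ₂)D]`. -/
theorem interaction_ratio_identifies_beta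
    {Ω : Type*} [MeasurableSpace Ω] (μ : Measure Ω) [IsProbabilityMeasure μ]
    {p : ℕ} (hp : 2 ≤ p) (Z : Fin p → Ω → ℝ) (T D ε : Ω → ℝ)
    (hmeas : ∀ i, Measurable (Z i)) (hTmeas : Measurable T) (hDmeas : Measurable D)
    (hεmeas : Measurable ε)
    (hindep : iIndepFun Z μ)
    (hint : ∀ i, Integrable (Z i) μ)
    (ζ : Fin p → ℝ) (hζ : ∀ i, ζ i = ∫ ω, Z i ω ∂μ)
    (β₀ : ℝ) (φ : Fin p → ℝ)
    (hstruct : ∀ ω, T ω = β₀ * D ω + (∑ k, φ k * Z k ω) + ε ω)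
    (hεint : Integrable ε μ)
    (hcond : μ[ε | MeasurableSpace.comap (fun ω i => Z i ω) inferInstance] =ᵐ[μ] 0)
    (j₁ j₂ : Fin p) (hj : j₁ ≠ j₂)
    (hTprod : Integrable (fun ω => (Z j₁ ω - ζ j₁) * (Z j₂ ω - ζ j₂) * T ω) μ)
    (hDprod : Integrable (fun ω => (Z j₁ ω - ζ j₁) * (Z j₂ ω - ζ j₂) * D ω) μ)
    (hεprod : Integrable (fun ω => (Z j₁ ω - ζ j₁) * (Z j₂ ω - ζ j₂) * ε ω) μ)
    (hZprod : ∀ k, Integrable (fun ω => (Z j₁ ω - ζ j₁) * (Z j₂ ω - ζ j₂) * Z k ω) μ)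
    (hden : ∫ ω, (Z j₁ ω - ζ j₁) * (Z j₂ ω - ζ j₂) * D ω ∂μ ≠ 0) :
    β₀ = (∫ ω, (Z j₁ ω - ζ j₁) * (Z j₂ ω - ζ j₂) * T ω ∂μ) /
          (∫ ω, (Z j₁ ω - ζ j₁) * (Z j₂ ω - ζ j₂) * D ω ∂μ) :=
  interaction_ratio_identifies_beta_general μ Z T D ε hmeas hindep ζ hζ β₀ φ hstruct hεint hcond j₁
    j₂ hj hDprod hεprod hZprod hden
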